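/- arXiv:math/0002014 — 2 statements merged into one kernel-verified Lean document; each statement's English description precedes it below -/
import Mathlib

section
/- For R a commutative k-algebra and n ≥ 1, D^m_k(M_n(R)) = M_{n²}(D^m_k(R)) for every m ≥ 0, and hence D_k(M_n(R)) = M_{n²}(D_k(R)). -/
/-! Taking components and reassembling from components both carry generators of one filtration
to the other. The `((i,j),(p,q))` component of `a ∘ Φ ∘ b` is
`∑ a_{ii'} ∘ Φ_{(i',j),(p',q)} ∘ b_{p'p}`, and the commutator of a component with `r ∈ R` is the
component of the commutator with `r • 1`. Conversely `Φ = ∑ E_{ip} ∘ ψ^{entrywise} ∘ (· * E_{qj})`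
with `ψ = Φ_{(i,j),(p,q)}`; right multiplications commute with the left `M_n(R)`-action and so
preserve `D^m`, and the commutator of `c` with `ψ^{entrywise}` is
`∑ E_{ae} ∘ [c_{ae}, ψ]^{entrywise}`. Induction on the order then gives both inclusions for `D^m`;
for `D` one bounds the finitely many orders of the components by a common one. -/

open MulOpposite

instance (priority := 900) smulCommSelf' {k A : Type*} [CommSemiring k] [Semiring A]
    [Algebra k A] : SMulCommClass A k A := SMulCommClass.symm k A A

variable (k : Type*) [Field k]
variable (A : Type*) [Ring A] [Algebra k A]
variable (L : Type*) [AddCommGroup L] [Module k L] [Module A L] [SMulCommClass A k L]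

/-- Left action of `A` on `L` as a `k`-linear endomorphism. -/
def lop (a : A) : L →ₗ[k] L where
  toFun x := a • x
  map_add' := smul_add a
  map_smul' c x := smul_comm a c x

/-- The `A`-sub-bimodule (as an additive subgroup closed under both actions)
generated by a set of operators. -/
def genBi (T : Set (L →ₗ[k] L)) : AddSubgroup (L →ₗ[k] L) :=
  AddSubgroup.closure {ψ | ∃ a b : A, ∃ t ∈ T, ψ = (lop k A L a).comp (t.comp (lop k A L b))}

/-- The Lunts–Rosenberg filtration of differential operators on the left `A`-module `L`:
`Dfil 0` is the sub-bimodule generated by the central elements of `Hom_k(L,L)`, and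
`Dfil (m+1)` is the sub-bimodule generated by operators whose commutators with `A`
lie in `Dfil m`. -/
def Dfil : ℕ → AddSubgroup (L →ₗ[k] L)
  | 0 => genBi k A L {φ | ∀ a : A, (lop k A L a).comp φ = φ.comp (lop k A L a)}
  | (m+1) => genBi k A L {φ | ∀ a : A, (lop k A L a).comp φ - φ.comp (lop k A L a) ∈ Dfil m}

/-- The ring of differential operators: union of the filtration. -/
def Ddiff : Set (L →ₗ[k] L) := ⋃ m, (Dfil k A L m : Set (L →ₗ[k] L))

section Filtration

variable {k : Type*} [Field k] {A : Type*} [Ring A]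
  {L : Type*} [AddCommGroup L] [Module k L] [Module A L] [SMulCommClass A k L]

@[simp] lemma lop_apply (a : A) (x : L) : lop k A L a x = a • x := rfl

lemma lop_mul (a b : A) : lop k A L (a * b) = (lop k A L a).comp (lop k A L b) :=
  LinearMap.ext (mul_smul a b)

lemma genBi_le_iff {T : Set (L →ₗ[k] L)} {S : AddSubgroup (L →ₗ[k] L)} :
    genBi k A L T ≤ S ↔ ∀ a b : A, ∀ t ∈ T, (lop k A L a).comp (t.comp (lop k A L b)) ∈ S := by
  rw [genBi, AddSubgroup.closure_le]
  exact ⟨fun h a b t ht => h ⟨a, b, t, ht, rfl⟩, by rintro h _ ⟨a, b, t, ht, rfl⟩; exact h a b t ht⟩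

lemma conj_mem_genBi {T : Set (L →ₗ[k] L)} {t : L →ₗ[k] L} (ht : t ∈ T) (a b : A) :
    (lop k A L a).comp (t.comp (lop k A L b)) ∈ genBi k A L T :=
  genBi_le_iff.1 le_rfl a b t ht

lemma genBi_mono : Monotone (genBi k A L) := fun _ _ hT =>
  genBi_le_iff.2 fun a b _ ht => conj_mem_genBi (hT ht) a b

lemma lop_comp_mem_genBi {T : Set (L →ₗ[k] L)} {φ : L →ₗ[k] L} (hφ : φ ∈ genBi k A L T)
    (a : A) : (lop k A L a).comp φ ∈ genBi k A L T := by
  suffices h : genBi k A L T ≤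
      (genBi k A L T).comap (AddMonoidHom.mulLeft (lop k A L a : Module.End k L)) from h hφ
  refine genBi_le_iff.2 fun a' b t ht => ?_
  change (lop k A L a).comp ((lop k A L a').comp (t.comp (lop k A L b))) ∈ genBi k A L T
  rw [← LinearMap.comp_assoc, ← lop_mul]
  exact conj_mem_genBi ht _ _

variable (k A L) in
/-- `D^{m-1}`, with `D^{-1} = 0`: in these terms both clauses of `Dfil` say that `D^m` is
generated by `DfilGen m`, the operators whose commutators with `A` lie in `D^{m-1}`. -/
def DfilPrev : ℕ → AddSubgroup (L →ₗ[k] L)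
  | 0 => ⊥
  | m + 1 => Dfil k A L m

variable (k A L) in
def DfilGen (m : ℕ) : Set (L →ₗ[k] L) :=
  {φ | ∀ a : A, (lop k A L a).comp φ - φ.comp (lop k A L a) ∈ DfilPrev k A L m}

lemma Dfil_eq_genBi_DfilGen (m : ℕ) : Dfil k A L m = genBi k A L (DfilGen k A L m) := by
  cases m with
  | zero => simp only [Dfil, DfilGen, DfilPrev, AddSubgroup.mem_bot, sub_eq_zero]
  | succ m => rfl

lemma conj_mem_Dfil_of_mem_DfilGen {m : ℕ} {t : L →ₗ[k] L} (ht : t ∈ DfilGen k A L m)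
    (a b : A) : (lop k A L a).comp (t.comp (lop k A L b)) ∈ Dfil k A L m := by
  rw [Dfil_eq_genBi_DfilGen]
  exact conj_mem_genBi ht a b

lemma lop_comp_mem_Dfil {m : ℕ} {φ : L →ₗ[k] L} (hφ : φ ∈ Dfil k A L m) (a : A) :
    (lop k A L a).comp φ ∈ Dfil k A L m := by
  rw [Dfil_eq_genBi_DfilGen] at hφ ⊢
  exact lop_comp_mem_genBi hφ a

lemma lop_comp_mem_DfilPrev {m : ℕ} {φ : L →ₗ[k] L} (hφ : φ ∈ DfilPrev k A L m) (a : A) :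
    (lop k A L a).comp φ ∈ DfilPrev k A L m := by
  cases m with
  | zero => rw [DfilPrev, AddSubgroup.mem_bot] at hφ ⊢; rw [hφ, LinearMap.comp_zero]
  | succ m => exact lop_comp_mem_Dfil hφ a

lemma Dfil_le_succ (m : ℕ) : Dfil k A L m ≤ Dfil k A L (m + 1) := by
  induction m with
  | zero =>
    rw [Dfil_eq_genBi_DfilGen 0, Dfil_eq_genBi_DfilGen 1]
    exact genBi_mono fun φ hφ a => (bot_le : ⊥ ≤ Dfil k A L 0) (hφ a)
  | succ m ih =>
    rw [Dfil_eq_genBi_DfilGen (m + 1), Dfil_eq_genBi_DfilGen (m + 2)]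
    exact genBi_mono fun φ hφ a => ih (hφ a)

lemma Dfil_mono : Monotone (Dfil k A L) := monotone_nat_of_le_succ Dfil_le_succ

theorem map_mem_Dfil_of_generators {A' : Type*} [Ring A'] {L' : Type*} [AddCommGroup L']
    [Module k L'] [Module A' L'] [SMulCommClass A' k L'] {ι : Type*}
    (F : ι → (L →ₗ[k] L) →+ (L' →ₗ[k] L'))
    (step : ∀ m, (∀ x, ∀ φ ∈ DfilPrev k A L m, F x φ ∈ DfilPrev k A' L' m) →
      ∀ x (a b : A), ∀ t ∈ DfilGen k A L m,
        F x ((lop k A L a).comp (t.comp (lop k A L b))) ∈ Dfil k A' L' m)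
    (m : ℕ) (x : ι) {φ : L →ₗ[k] L} (hφ : φ ∈ Dfil k A L m) : F x φ ∈ Dfil k A' L' m := by
  have key : ∀ m, (∀ x, ∀ φ ∈ DfilPrev k A L m, F x φ ∈ DfilPrev k A' L' m) →
      ∀ x, ∀ φ ∈ Dfil k A L m, F x φ ∈ Dfil k A' L' m := by
    intro m hprev x φ hφ
    rw [Dfil_eq_genBi_DfilGen] at hφ
    exact (genBi_le_iff (S := (Dfil k A' L' m).comap (F x))).2 (step m hprev x) hφ
  induction m generalizing x φ with
  | zero =>
    refine key 0 (fun x ψ hψ => ?_) x φ hφ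
    rw [DfilPrev, AddSubgroup.mem_bot] at hψ ⊢
    rw [hψ, map_zero]
  | succ m ih => exact key (m + 1) (fun x _ hψ => ih x hψ) x φ hφ

lemma comp_mem_Dfil_of_commute {z : L →ₗ[k] L}
    (hz : ∀ a : A, (lop k A L a).comp z = z.comp (lop k A L a)) {m : ℕ} {φ : L →ₗ[k] L}
    (hφ : φ ∈ Dfil k A L m) : φ.comp z ∈ Dfil k A L m := by
  refine map_mem_Dfil_of_generators (fun _ : Unit => AddMonoidHom.mulRight (z : Module.End k L))
    (fun m hprev _ a b t ht => ?_) m () hφ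
  have hconj : ((lop k A L a).comp (t.comp (lop k A L b))).comp z
      = (lop k A L a).comp ((t.comp z).comp (lop k A L b)) := by
    simp only [LinearMap.comp_assoc, hz b]
  change ((lop k A L a).comp (t.comp (lop k A L b))).comp z ∈ Dfil k A L m
  rw [hconj]
  refine conj_mem_Dfil_of_mem_DfilGen (fun c => ?_) a b
  have hcomm : (lop k A L c).comp (t.comp z) - (t.comp z).comp (lop k A L c)
      = ((lop k A L c).comp t - t.comp (lop k A L c)).comp z := by
    simp only [LinearMap.sub_comp, LinearMap.comp_assoc, hz c]
  rw [hcomm]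
  exact hprev () _ (ht c)

lemma mem_Ddiff_iff_forall_of_mem_Dfil_iff {A' : Type*} [Ring A'] {L' : Type*}
    [AddCommGroup L'] [Module k L'] [Module A' L'] [SMulCommClass A' k L'] {ι : Type*}
    [Finite ι] {φ : L →ₗ[k] L} {f : ι → L' →ₗ[k] L'}
    (h : ∀ m, φ ∈ Dfil k A L m ↔ ∀ x, f x ∈ Dfil k A' L' m) :
    φ ∈ Ddiff k A L ↔ ∀ x, f x ∈ Ddiff k A' L' := by
  simp only [Ddiff, Set.mem_iUnion, SetLike.mem_coe]
  constructor
  · rintro ⟨m, hm⟩ x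
    exact ⟨m, (h m).1 hm x⟩
  · intro hf
    choose m hm using hf
    obtain ⟨M, hM⟩ := Finite.exists_le m
    exact ⟨M, (h M).2 fun x => Dfil_mono (hM x) (hm x)⟩

end Filtration

section MapMatrix

variable {k : Type*} [Field k] {R : Type*} [CommRing R] [Algebra k R]
  {ι : Type*} [Fintype ι] [DecidableEq ι]

def mapMatrixAddHom : (R →ₗ[k] R) →+ (Matrix ι ι R →ₗ[k] Matrix ι ι R) where
  toFun ψ := ψ.mapMatrix
  map_zero' := rfl
  map_add' _ _ := rfl

lemma mapMatrix_conj (r s : R) (ψ : R →ₗ[k] R) :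
    ((lop k R R r).comp (ψ.comp (lop k R R s))).mapMatrix
      = (lop k (Matrix ι ι R) (Matrix ι ι R) (r • 1)).comp
          (ψ.mapMatrix.comp (lop k (Matrix ι ι R) (Matrix ι ι R) (s • 1))) := by
  ext X a b
  simp [smul_eq_mul]

lemma commutator_lop_mapMatrix (c : Matrix ι ι R) (ψ : R →ₗ[k] R) :
    (lop k (Matrix ι ι R) (Matrix ι ι R) c).comp ψ.mapMatrix
        - ψ.mapMatrix.comp (lop k (Matrix ι ι R) (Matrix ι ι R) c)
      = ∑ a, ∑ e, (lop k (Matrix ι ι R) (Matrix ι ι R) (Matrix.single a e 1)).comp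
          ((lop k R R (c a e)).comp ψ - ψ.comp (lop k R R (c a e))).mapMatrix := by
  ext X x y
  simp [smul_eq_mul, Matrix.mul_apply, Matrix.sum_apply, Matrix.single_apply, ite_and,
    Finset.sum_sub_distrib]

lemma single_mul_mapMatrix_mul_single (ψ : R →ₗ[k] R) (X : Matrix ι ι R) (i p q j : ι) :
    Matrix.single i p 1 * ψ.mapMatrix (X * Matrix.single q j 1)
      = Matrix.single i j (ψ (X p q)) := by
  ext x y
  by_cases hi : i = x <;> by_cases hj : j = y <;>
    simp [Matrix.mul_apply, Matrix.single_apply, hi, hj]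

lemma mapMatrix_mem_Dfil {m : ℕ} {ψ : R →ₗ[k] R} (hψ : ψ ∈ Dfil k R R m) :
    ψ.mapMatrix ∈ Dfil k (Matrix ι ι R) (Matrix ι ι R) m := by
  refine map_mem_Dfil_of_generators (A' := Matrix ι ι R) (L' := Matrix ι ι R)
    (fun _ : Unit => mapMatrixAddHom)
    (fun m hprev _ r s t ht => ?_) m () hψ
  change ((lop k R R r).comp (t.comp (lop k R R s))).mapMatrix ∈ _
  rw [mapMatrix_conj]
  refine conj_mem_Dfil_of_mem_DfilGen (fun c => ?_) _ _
  rw [commutator_lop_mapMatrix]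
  exact sum_mem fun a _ => sum_mem fun e _ => lop_comp_mem_DfilPrev (hprev () _ (ht _)) _

end MapMatrix

section Stmt8

variable {k : Type*} [Field k] {R : Type*} [CommRing R] [Algebra k R] {n : ℕ}

/-- The component `φ_{(i,j),(p,q)}` of an operator `Φ` on the matrix algebra `M_n(R)`,
identifying `Hom_k(M_n(R), M_n(R))` with `n²×n²` matrices over `Hom_k(R,R)` via the
standard basis `E_{pq}` of `M_n(R)` over `R`. -/
def matrixEntryOp (Φ : Matrix (Fin n) (Fin n) R →ₗ[k] Matrix (Fin n) (Fin n) R)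
    (i j p q : Fin n) : R →ₗ[k] R where
  toFun r := Φ (r • Matrix.single p q (1 : R)) i j
  map_add' r s := by simp [add_smul]
  map_smul' c r := by
    show Φ ((c • r) • _) i j = c • Φ (r • _) i j
    rw [smul_assoc, map_smul, Matrix.smul_apply]

local notation "Mat" => Matrix (Fin n) (Fin n) R

def matrixEntryOpAddHom (i j p q : Fin n) : (Mat →ₗ[k] Mat) →+ (R →ₗ[k] R) where
  toFun Φ := matrixEntryOp Φ i j p q
  map_zero' := rfl
  map_add' _ _ := rfl

lemma matrixEntryOp_conj (a b : Mat) (Φ : Mat →ₗ[k] Mat) (i j p q : Fin n) :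
    matrixEntryOp ((lop k Mat Mat a).comp (Φ.comp (lop k Mat Mat b))) i j p q
      = ∑ i', ∑ p', (lop k R R (a i i')).comp
          ((matrixEntryOp Φ i' j p' q).comp (lop k R R (b p' p))) := by
  ext s
  have hb : b * Matrix.single p q s = ∑ p', Matrix.single p' q (b p' p * s) := by
    ext x y
    simp [Matrix.mul_apply, Matrix.sum_apply, Matrix.single_apply, ite_and]
  simp [matrixEntryOp, hb, Matrix.mul_apply, Matrix.sum_apply, Finset.mul_sum]

lemma matrixEntryOp_commutator_smul_one (r : R) (Φ : Mat →ₗ[k] Mat) (i j p q : Fin n) :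
    matrixEntryOp ((lop k Mat Mat (r • 1)).comp Φ - Φ.comp (lop k Mat Mat (r • 1))) i j p q
      = (lop k R R r).comp (matrixEntryOp Φ i j p q)
          - (matrixEntryOp Φ i j p q).comp (lop k R R r) := by
  ext s
  simp [matrixEntryOp]

lemma matrixEntryOp_mem_Dfil {m : ℕ} {Φ : Mat →ₗ[k] Mat} (hΦ : Φ ∈ Dfil k Mat Mat m)
    (i j p q : Fin n) : matrixEntryOp Φ i j p q ∈ Dfil k R R m := by
  refine map_mem_Dfil_of_generators (A' := R) (L' := R)
    (fun x : Fin n × Fin n × Fin n × Fin n => matrixEntryOpAddHom x.1 x.2.1 x.2.2.1 x.2.2.2)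
    (fun m hprev ⟨_, j', _, q'⟩ a b t ht => ?_) m (i, j, p, q) hΦ
  change matrixEntryOp ((lop k Mat Mat a).comp (t.comp (lop k Mat Mat b))) _ _ _ _ ∈ _
  rw [matrixEntryOp_conj]
  refine sum_mem fun i' _ => sum_mem fun p' _ => conj_mem_Dfil_of_mem_DfilGen (fun r => ?_) _ _
  rw [← matrixEntryOp_commutator_smul_one]
  exact hprev (i', j', p', q') _ (ht _)

lemma eq_sum_lop_comp_mapMatrix_comp_mulRight (Φ : Mat →ₗ[k] Mat) :
    Φ = ∑ i, ∑ j, ∑ p, ∑ q, (lop k Mat Mat (Matrix.single i p 1)).comp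
      ((matrixEntryOp Φ i j p q).mapMatrix.comp (LinearMap.mulRight k (Matrix.single q j 1))) := by
  ext1 X
  have hX : X = ∑ p, ∑ q, X p q • Matrix.single p q 1 := by
    simpa [Matrix.smul_single] using Matrix.matrix_eq_sum_single X
  calc Φ X = ∑ i, ∑ j, Matrix.single i j (Φ X i j) := Matrix.matrix_eq_sum_single _
    _ = ∑ i, ∑ j, Matrix.single i j (∑ p, ∑ q, matrixEntryOp Φ i j p q (X p q)) := by
      conv_lhs => rw [hX]
      simp only [map_sum, Matrix.sum_apply, matrixEntryOp, LinearMap.coe_mk, AddHom.coe_mk]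
    _ = ∑ i, ∑ j, ∑ p, ∑ q, Matrix.single i j (matrixEntryOp Φ i j p q (X p q)) := by
      simp only [← Matrix.singleAddMonoidHom_apply, map_sum]
    _ = _ := by
      simp only [LinearMap.sum_apply, LinearMap.comp_apply, lop_apply, smul_eq_mul,
        LinearMap.mulRight_apply, single_mul_mapMatrix_mul_single]

lemma mem_Dfil_of_forall_matrixEntryOp_mem {m : ℕ} {Φ : Mat →ₗ[k] Mat}
    (h : ∀ i j p q, matrixEntryOp Φ i j p q ∈ Dfil k R R m) : Φ ∈ Dfil k Mat Mat m := by
  rw [eq_sum_lop_comp_mapMatrix_comp_mulRight Φ]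
  refine sum_mem fun i _ => sum_mem fun j _ => sum_mem fun p _ => sum_mem fun q _ => ?_
  refine lop_comp_mem_Dfil (comp_mem_Dfil_of_commute (fun c => ?_)
    (mapMatrix_mem_Dfil (h i j p q))) _
  exact LinearMap.ext fun X => (mul_assoc c X _).symm

/-- `D^m_k(M_n(R)) = M_{n²}(D^m_k(R))` for every `m`, and hence
`D_k(M_n(R)) = M_{n²}(D_k(R))`: an operator on `M_n(R)` is a differential operator of
order `≤ m` iff all its `n² × n²` components lie in `D^m_k(R)`. -/
theorem Dfil_matrix_eq_matrix_Dfil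
    (Φ : Matrix (Fin n) (Fin n) R →ₗ[k] Matrix (Fin n) (Fin n) R) :
    (∀ m : ℕ, Φ ∈ Dfil k (Matrix (Fin n) (Fin n) R) (Matrix (Fin n) (Fin n) R) m ↔
      ∀ i j p q, matrixEntryOp Φ i j p q ∈ Dfil k R R m) ∧
    (Φ ∈ Ddiff k (Matrix (Fin n) (Fin n) R) (Matrix (Fin n) (Fin n) R) ↔
      ∀ i j p q, matrixEntryOp Φ i j p q ∈ Ddiff k R R) := by
  have hDfil : ∀ m : ℕ, Φ ∈ Dfil k Mat Mat m ↔ ∀ i j p q, matrixEntryOp Φ i j p q ∈ Dfil k R R m :=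
    fun m => ⟨fun hΦ => matrixEntryOp_mem_Dfil hΦ, mem_Dfil_of_forall_matrixEntryOp_mem⟩
  refine ⟨hDfil, ?_⟩
  simpa only [Prod.forall] using mem_Ddiff_iff_forall_of_mem_Dfil_iff
    (f := fun x : Fin n × Fin n × Fin n × Fin n => matrixEntryOp Φ x.1 x.2.1 x.2.2.1 x.2.2.2)
    (by simpa only [Prod.forall] using hDfil)

end Stmt8
end

section
/- Let A be Azumaya over commutative Noetherian R with dual basis {b_i, f_i}. For φ ∈ Hom_k(R,R), the extension φ̄ = Σ_i ρ_{b_i}∘φ∘f_i satisfies (s·φ·r)‾ = s·φ̄·r for all r,s ∈ R; consequently if φ ∈ D^m_k(R) then φ̄ ∈ D^m_k(_R A), and since φ̄|_R = φ, the map φ ↦ φ̄ is an injective R-bimodule map D^m_k(R) → D^m_k(_R A). -/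
open MulOpposite

variable (k : Type*) [Field k]
variable (A : Type*) [Ring A] [Algebra k A]
variable (L : Type*) [AddCommGroup L] [Module k L] [Module A L] [SMulCommClass A k L]

open TensorProduct MulOpposite in
/-- The Azumaya condition for an `R`-algebra `A`: finitely generated, projective and
faithful as an `R`-module, `R·1` is the center of `A`, and the canonical map
`A ⊗_R A^op → End_R(A)`, `a ⊗ b^op ↦ (c ↦ a c b)`, is bijective (here recorded as the
existence of a linear equivalence realizing this map). -/
structure IsAzumayaAlg (R A : Type*) [CommRing R] [Ring A] [Algebra R A] : Prop where
  finite : Module.Finite R A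
  projective : Module.Projective R A
  faithful : FaithfulSMul R A
  center_le : ∀ a : A, (∀ b : A, a * b = b * a) → ∃ r : R, algebraMap R A r = a
  bij : ∃ e : (A ⊗[R] Aᵐᵒᵖ) ≃ₗ[R] (A →ₗ[R] A),
      ∀ (a b x : A), e (a ⊗ₜ[R] op b) x = a * x * b

section DualBasis

variable (k R A : Type*) [Field k] [CommRing R] [Algebra k R] [Ring A] [Algebra R A]
  [Algebra k A] [IsScalarTower k R A] [SMulCommClass R k A] {n : ℕ}

/-- The extension `φ̄ = Σ_i ρ_{b_i} ∘ φ ∘ f_i ∈ Hom_k(A,A)` of an operator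
`φ ∈ Hom_k(R,R)`, relative to a dual basis `{b_i, f_i}` of the `R`-module `A`. -/
noncomputable def extOp (b : Fin (n + 1) → A) (f : Fin (n + 1) → (A →ₗ[R] R))
    (φ : R →ₗ[k] R) : A →ₗ[k] A :=
  ∑ i, (LinearMap.mulRight k (b i)).comp
    (((Algebra.linearMap R A).restrictScalars k).comp (φ.comp ((f i).restrictScalars k)))

end DualBasis

/-!
Each summand `ρ_{b_i} ∘ φ ∘ f_i` of `φ̄` is built from the `R`-linear maps `f_i` and `r ↦ r b_i`,
so `φ ↦ φ̄` is additive and commutes with the left and right actions of `R`. Such a map sends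
the generators of each step of the filtration, defined by commutators with `R`, to generators
of the same step, so it preserves the filtration by induction on `m`. Since `b_0 = 1` and `f_i`
kills `R` for `i ≠ 0`, `φ̄` restricts to `φ` on `R`, and `φ = f_0 ∘ φ̄` on `R` gives injectivity.
-/

section Filtration

variable {k A L M : Type*} [Field k] [Ring A]
  [AddCommGroup L] [Module k L] [Module A L] [SMulCommClass A k L]
  [AddCommGroup M] [Module k M] [Module A M] [SMulCommClass A k M]

lemma lop_one : lop k A L 1 = LinearMap.id :=
  LinearMap.ext (one_smul A)

variable {F : (L →ₗ[k] L) →+ (M →ₗ[k] M)}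
  (hF : ∀ (a a' : A) (t : L →ₗ[k] L),
    F ((lop k A L a).comp (t.comp (lop k A L a'))) = (lop k A M a).comp ((F t).comp (lop k A M a')))
include hF

lemma genBi_le_comap {T : Set (L →ₗ[k] L)} {T' : Set (M →ₗ[k] M)} (hT : Set.MapsTo F T T') :
    genBi k A L T ≤ (genBi k A M T').comap F := by
  refine (AddSubgroup.closure_le _).2 ?_
  rintro _ ⟨a, a', t, ht, rfl⟩
  show F _ ∈ genBi k A M T'
  rw [hF]
  exact AddSubgroup.subset_closure ⟨a, a', F t, hT ht, rfl⟩

lemma map_lop_commutator (a : A) (t : L →ₗ[k] L) :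
    F ((lop k A L a).comp t - t.comp (lop k A L a)) =
      (lop k A M a).comp (F t) - (F t).comp (lop k A M a) := by
  have hleft := hF a 1 t
  have hright := hF 1 a t
  simp only [lop_one, LinearMap.comp_id, LinearMap.id_comp] at hleft hright
  rw [map_sub, hleft, hright]

lemma Dfil_le_comap (m : ℕ) : Dfil k A L m ≤ (Dfil k A M m).comap F := by
  induction m with
  | zero =>
    refine genBi_le_comap hF fun t ht a => sub_eq_zero.1 ?_
    rw [← map_lop_commutator hF, sub_eq_zero.2 (ht a), map_zero]
  | succ m ih =>
    refine genBi_le_comap hF fun t ht a => ?_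
    rw [← map_lop_commutator hF]
    exact ih (ht a)

end Filtration

section Extension

variable {k R A : Type*} [Field k] [CommRing R] [Algebra k R] [Ring A] [Algebra R A]
  [Algebra k A] [IsScalarTower k R A] {n : ℕ} (b : Fin (n + 1) → A) (f : Fin (n + 1) → (A →ₗ[R] R))

lemma extOp_apply (φ : R →ₗ[k] R) (a : A) :
    extOp k R A b f φ a = ∑ i, algebraMap R A (φ (f i a)) * b i := by
  simp [extOp]

lemma extOp_add (φ ψ : R →ₗ[k] R) :
    extOp k R A b f (φ + ψ) = extOp k R A b f φ + extOp k R A b f ψ := by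
  ext a
  simp [extOp_apply, add_mul, Finset.sum_add_distrib]

lemma extOp_lop_comp_comp [SMulCommClass R k A] (r s : R) (φ : R →ₗ[k] R) :
    extOp k R A b f ((lop k R R s).comp (φ.comp (lop k R R r))) =
      (lop k R A s).comp ((extOp k R A b f φ).comp (lop k R A r)) := by
  ext a
  simp only [LinearMap.comp_apply, extOp_apply, lop, LinearMap.coe_mk, AddHom.coe_mk,
    Finset.smul_sum]
  refine Finset.sum_congr rfl fun i _ => ?_
  rw [map_smul (f i), smul_eq_mul, smul_eq_mul, ← smul_mul_assoc, Algebra.smul_def, ← map_mul]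

variable {b f}

lemma extOp_algebraMap (hb0 : b 0 = 1) (hf0 : ∀ r : R, f 0 (algebraMap R A r) = r)
    (hfi : ∀ i, i ≠ 0 → ∀ r : R, f i (algebraMap R A r) = 0) (φ : R →ₗ[k] R) (r : R) :
    extOp k R A b f φ (algebraMap R A r) = algebraMap R A (φ r) := by
  rw [extOp_apply, Finset.sum_eq_single 0 (fun i _ hi => by simp [hfi i hi]) (by simp), hf0,
    hb0, mul_one]

lemma extOp_injective (hb0 : b 0 = 1) (hf0 : ∀ r : R, f 0 (algebraMap R A r) = r)
    (hfi : ∀ i, i ≠ 0 → ∀ r : R, f i (algebraMap R A r) = 0) :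
    Function.Injective (extOp k R A b f) := fun φ ψ h => LinearMap.ext fun r => by
  have h₀ := congr(f 0 ($h (algebraMap R A r)))
  rwa [extOp_algebraMap hb0 hf0 hfi, extOp_algebraMap hb0 hf0 hfi, hf0, hf0] at h₀

end Extension

theorem extOp_bimodule_injective_general (k R A : Type*) [Field k] [CommRing R] [Algebra k R]
    [Ring A] [Algebra R A] [Algebra k A] [IsScalarTower k R A]
    [SMulCommClass R k A] {n : ℕ} (b : Fin (n + 1) → A)
    (f : Fin (n + 1) → (A →ₗ[R] R))
    (hb0 : b 0 = 1)
    (hf0 : ∀ r : R, f 0 (algebraMap R A r) = r)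
    (hfi : ∀ i, i ≠ 0 → ∀ r : R, f i (algebraMap R A r) = 0) :
    (∀ (r s : R) (φ : R →ₗ[k] R),
        extOp k R A b f ((lop k R R s).comp (φ.comp (lop k R R r))) =
          (lop k R A s).comp ((extOp k R A b f φ).comp (lop k R A r))) ∧
    (∀ (m : ℕ) (φ : R →ₗ[k] R), φ ∈ Dfil k R R m → extOp k R A b f φ ∈ Dfil k R A m) ∧
    (∀ (φ : R →ₗ[k] R) (r : R),
        extOp k R A b f φ (algebraMap R A r) = algebraMap R A (φ r)) ∧
    Function.Injective (extOp k R A b f) :=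
  ⟨extOp_lop_comp_comp b f,
    fun m => Dfil_le_comap (F := AddMonoidHom.mk' (extOp k R A b f) (extOp_add b f))
      (fun s r φ => extOp_lop_comp_comp b f r s φ) m,
    extOp_algebraMap hb0 hf0 hfi, extOp_injective hb0 hf0 hfi⟩

/-- For an Azumaya algebra `A` over a commutative Noetherian `k`-algebra `R` with dual
basis `{b_i, f_i}`, the extension `φ ↦ φ̄` satisfies `(s·φ·r)‾ = s·φ̄·r` for `r, s ∈ R`;
consequently `φ ∈ D^m_k(R)` implies `φ̄ ∈ D^m_k(_R A)`; moreover `φ̄` restricts to `φ` on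
`R`, so `φ ↦ φ̄` is an injective `R`-bimodule map `D^m_k(R) → D^m_k(_R A)`. -/
theorem extOp_bimodule_injective (k R A : Type*) [Field k] [CommRing R] [Algebra k R]
    [IsNoetherianRing R] [Ring A] [Algebra R A] [Algebra k A] [IsScalarTower k R A]
    [SMulCommClass R k A] (hAz : IsAzumayaAlg R A) {n : ℕ} (b : Fin (n + 1) → A)
    (f : Fin (n + 1) → (A →ₗ[R] R))
    (hdb : ∀ a : A, ∑ i, f i a • b i = a) (hb0 : b 0 = 1)
    (hf0 : ∀ r : R, f 0 (algebraMap R A r) = r)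
    (hfi : ∀ i, i ≠ 0 → ∀ r : R, f i (algebraMap R A r) = 0) :
    (∀ (r s : R) (φ : R →ₗ[k] R),
        extOp k R A b f ((lop k R R s).comp (φ.comp (lop k R R r))) =
          (lop k R A s).comp ((extOp k R A b f φ).comp (lop k R A r))) ∧
    (∀ (m : ℕ) (φ : R →ₗ[k] R), φ ∈ Dfil k R R m → extOp k R A b f φ ∈ Dfil k R A m) ∧
    (∀ (φ : R →ₗ[k] R) (r : R),
        extOp k R A b f φ (algebraMap R A r) = algebraMap R A (φ r)) ∧
    Function.Injective (extOp k R A b f) :=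
  extOp_bimodule_injective_general k R A b f hb0 hf0 hfi
end
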